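/- arXiv:1810.08504 — 6 statements merged into one kernel-verified Lean document; each statement's English description precedes it below -/
import Mathlib

section
/- Let f : ℝ → ℝ be continuous and let u : ℝ → ℝ be a bounded C² solution of -u'' = f(u) on ℝ such that u(x) → z⁻ as x → -∞, u(x) → z⁺ as x → +∞, and u'(x) → 0 as x → ±∞. Then ∫_{z⁻}^{z⁺} f(s) ds = 0. -/
/-!
Multiplying the equation by `u'` shows that the energy `u'² / 2 + F(u)`, with `F` a primitive of
`f`, is constant along the solution. Letting `x → ±∞` gives `F(z⁻) = F(z⁺)`, which is the claim
by the fundamental theorem of calculus.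
-/

open Filter Topology intervalIntegral

noncomputable def energy (F u : ℝ → ℝ) (x : ℝ) : ℝ := deriv u x ^ 2 / 2 + F (u x)

section Energy

variable {f F u : ℝ → ℝ}

theorem hasDerivAt_energy (hF : ∀ y, HasDerivAt F (f y) y) (hu : ContDiff ℝ 2 u)
    (heq : ∀ x, -deriv (deriv u) x = f (u x)) (x : ℝ) : HasDerivAt (energy F u) 0 x := by
  have hu' : ContDiff ℝ 1 (deriv u) := hu.iterate_deriv' 1 1
  have hkin : HasDerivAt (fun x => deriv u x ^ 2 / 2) (deriv u x * deriv (deriv u) x) x := by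
    refine (((hu'.differentiable one_ne_zero) x).hasDerivAt.pow 2).div_const 2 |>.congr_deriv ?_
    ring
  have hpot : HasDerivAt (fun x => F (u x)) (f (u x) * deriv u x) x :=
    (hF (u x)).comp x ((hu.differentiable two_ne_zero) x).hasDerivAt
  refine (hkin.add hpot).congr_deriv ?_
  rw [← heq x]
  ring

theorem energy_eq (hF : ∀ y, HasDerivAt F (f y) y) (hu : ContDiff ℝ 2 u)
    (heq : ∀ x, -deriv (deriv u) x = f (u x)) (x y : ℝ) : energy F u x = energy F u y :=
  is_const_of_deriv_eq_zero (fun z => (hasDerivAt_energy hF hu heq z).differentiableAt)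
    (fun z => (hasDerivAt_energy hF hu heq z).deriv) x y

theorem tendsto_energy {l : Filter ℝ} {z : ℝ} (hF : Continuous F) (hul : Tendsto u l (𝓝 z))
    (hdl : Tendsto (deriv u) l (𝓝 0)) : Tendsto (energy F u) l (𝓝 (F z)) := by
  have h := ((hdl.pow 2).div_const 2).add (hF.tendsto z |>.comp hul)
  rwa [zero_pow two_ne_zero, zero_div, zero_add] at h

theorem eq_of_tendsto_energy {l : Filter ℝ} [l.NeBot] {z : ℝ} (hF : ∀ y, HasDerivAt F (f y) y)
    (hu : ContDiff ℝ 2 u) (heq : ∀ x, -deriv (deriv u) x = f (u x))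
    (hul : Tendsto u l (𝓝 z)) (hdl : Tendsto (deriv u) l (𝓝 0)) :
    F z = energy F u 0 := by
  have hlim := tendsto_energy (continuous_iff_continuousAt.2 fun y => (hF y).continuousAt) hul hdl
  rw [funext fun x => energy_eq hF hu heq x 0] at hlim
  exact (tendsto_const_nhds_iff.1 hlim).symm

end Energy

theorem stmt_1_general (f u : ℝ → ℝ) (zm zp : ℝ)
    (hf : Continuous f) (hu : ContDiff ℝ 2 u)
    (heq : ∀ x : ℝ, -(deriv (deriv u) x) = f (u x))
    (hum : Tendsto u atBot (nhds zm))
    (hup : Tendsto u atTop (nhds zp))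
    (hdm : Tendsto (deriv u) atBot (nhds 0))
    (hdp : Tendsto (deriv u) atTop (nhds 0)) :
    ∫ s in zm..zp, f s = 0 := by
  set F : ℝ → ℝ := fun x => ∫ t in (0 : ℝ)..x, f t
  have hF : ∀ y, HasDerivAt F (f y) y := fun y => (hf.integral_hasStrictDerivAt 0 y).hasDerivAt
  rw [integral_eq_sub_of_hasDerivAt (fun y _ => hF y) (hf.intervalIntegrable _ _),
    eq_of_tendsto_energy hF hu heq hup hdp, eq_of_tendsto_energy hF hu heq hum hdm, sub_self]

theorem stmt_1 (f u : ℝ → ℝ) (zm zp : ℝ)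
    (hf : Continuous f) (hu : ContDiff ℝ 2 u)
    (hbdd : ∃ M : ℝ, ∀ x, |u x| ≤ M)
    (heq : ∀ x : ℝ, -(deriv (deriv u) x) = f (u x))
    (hum : Tendsto u atBot (nhds zm))
    (hup : Tendsto u atTop (nhds zp))
    (hdm : Tendsto (deriv u) atBot (nhds 0))
    (hdp : Tendsto (deriv u) atTop (nhds 0)) :
    ∫ s in zm..zp, f s = 0 :=
  stmt_1_general f u zm zp hf hu heq hum hup hdm hdp
end

section
/- Let c : ℝⁿ → ℝ be continuous and suppose there exists a positive C² function v : ℝⁿ → ℝ satisfying Δv + c·v = 0 on ℝⁿ. Then for every smooth compactly supported function ψ : ℝⁿ → ℝ one has ∫_{ℝⁿ} (|∇ψ|² - c·ψ²) ≥ 0. -/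
open MeasureTheory

/-- The Laplacian of a function on Euclidean space, as the sum of second
partial derivatives in the coordinate directions. -/
noncomputable def laplacian {n : ℕ} (v : EuclideanSpace ℝ (Fin n) → ℝ)
    (x : EuclideanSpace ℝ (Fin n)) : ℝ :=
  ∑ i : Fin n,
    fderiv ℝ (fun y => fderiv ℝ v y (EuclideanSpace.single i 1)) x (EuclideanSpace.single i 1)

/-- The squared operator norm of a linear functional on Euclidean space equals the sum of the
squares of its values on the standard basis. -/
lemma norm_sq_eq_sum_sq {n : ℕ} (L : EuclideanSpace ℝ (Fin n) →L[ℝ] ℝ) :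
    ‖L‖ ^ 2 = ∑ i : Fin n, (L (EuclideanSpace.single i 1)) ^ 2 := by
  set g := (InnerProductSpace.toDual ℝ (EuclideanSpace ℝ (Fin n))).symm L with hg
  have h1 : ‖L‖ = ‖g‖ := ((InnerProductSpace.toDual ℝ _).symm.norm_map L).symm
  have h2 : ∀ i : Fin n, L (EuclideanSpace.single i 1) = g i := by
    intro i
    have := InnerProductSpace.toDual_symm_apply (𝕜 := ℝ)
      (x := EuclideanSpace.single i (1 : ℝ)) (y := L)
    rw [← this, ← hg, EuclideanSpace.inner_single_right]
    simp
  have h3 : ‖g‖ ^ 2 = ∑ i, (g i) ^ 2 := by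
    rw [EuclideanSpace.norm_eq, Real.sq_sqrt (by positivity)]
    simp [sq_abs]
  rw [h1, h3]
  exact Finset.sum_congr rfl fun i _ => by rw [h2 i]

theorem stmt_3 {n : ℕ} (hn : 1 ≤ n)
    (c : EuclideanSpace ℝ (Fin n) → ℝ) (hc : Continuous c)
    (v : EuclideanSpace ℝ (Fin n) → ℝ) (hv : ContDiff ℝ 2 v)
    (hvpos : ∀ x, 0 < v x)
    (heq : ∀ x, laplacian v x + c x * v x = 0) :
    ∀ ψ : EuclideanSpace ℝ (Fin n) → ℝ, ContDiff ℝ (⊤ : ℕ∞) ψ → HasCompactSupport ψ →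
      0 ≤ ∫ x, (‖fderiv ℝ ψ x‖^2 - c x * (ψ x)^2) := by
  intro ψ hψ hψc
  have hvne : ∀ x, v x ≠ 0 := fun x => (hvpos x).ne'
  have hψ2 : ContDiff ℝ 2 ψ := hψ.of_le (by exact WithTop.coe_le_coe.mpr le_top)
  set e : Fin n → EuclideanSpace ℝ (Fin n) := fun i => EuclideanSpace.single i 1 with he_def
  set u : EuclideanSpace ℝ (Fin n) → ℝ := fun x => ψ x / v x with hu_def
  have hu : ContDiff ℝ 2 u := hψ2.div hv hvne
  have huc : HasCompactSupport u := by
    apply hψc.mono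
    intro x hx
    simp only [hu_def, Function.mem_support] at hx ⊢
    intro h
    exact hx (by simp [h])
  set w : EuclideanSpace ℝ (Fin n) → ℝ := fun x => ψ x * u x with hw_def
  have hw : ContDiff ℝ 2 w := hψ2.mul hu
  have hwc : HasCompactSupport w := by
    apply hψc.mono
    intro x hx
    simp only [hw_def, Function.mem_support] at hx ⊢
    intro h
    exact hx (by simp [h])
  have hψuv : ∀ x, ψ x = u x * v x := fun x => (div_mul_cancel₀ (ψ x) (hvne x)).symm
  -- derivative of v in direction i, as a C¹ function
  have hb : ∀ i : Fin n, ContDiff ℝ 1 (fun y => fderiv ℝ v y (e i)) := by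
    intro i
    exact ((ContinuousLinearMap.apply ℝ ℝ (e i)).contDiff).comp (hv.fderiv_right (by norm_num))
  have hbcont : ∀ i : Fin n, Continuous (fun y => fderiv ℝ v y (e i)) :=
    fun i => (hb i).continuous
  have hb2cont : ∀ i : Fin n,
      Continuous (fun x => fderiv ℝ (fun y => fderiv ℝ v y (e i)) x (e i)) := by
    intro i
    exact ((ContinuousLinearMap.apply ℝ ℝ (e i)).continuous).comp
      ((hb i).continuous_fderiv (by norm_num))
  -- derivative of w, compact support and continuity
  have hwdc : ∀ i : Fin n, HasCompactSupport (fun x => fderiv ℝ w x (e i)) :=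
    fun i => hwc.fderiv_apply ℝ (e i)
  have hwdcont : ∀ i : Fin n, Continuous (fun x => fderiv ℝ w x (e i)) := by
    intro i
    exact ((ContinuousLinearMap.apply ℝ ℝ (e i)).continuous).comp
      (hw.continuous_fderiv (by norm_num))
  have hudc : ∀ i : Fin n, HasCompactSupport (fun x => fderiv ℝ u x (e i)) :=
    fun i => huc.fderiv_apply ℝ (e i)
  have hudcont : ∀ i : Fin n, Continuous (fun x => fderiv ℝ u x (e i)) := by
    intro i
    exact ((ContinuousLinearMap.apply ℝ ℝ (e i)).continuous).comp
      (hu.continuous_fderiv (by norm_num))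
  -- integrable pieces
  have int_wb : ∀ i : Fin n,
      Integrable (fun x => fderiv ℝ w x (e i) * fderiv ℝ v x (e i)) := by
    intro i
    exact ((hwdcont i).mul (hbcont i)).integrable_of_hasCompactSupport
      ((hwdc i).mul_right)
  have int_wb2 : ∀ i : Fin n,
      Integrable (fun x => w x * fderiv ℝ (fun y => fderiv ℝ v y (e i)) x (e i)) := by
    intro i
    exact ((hw.continuous).mul (hb2cont i)).integrable_of_hasCompactSupport
      (hwc.mul_right)
  have int_wb1 : ∀ i : Fin n,
      Integrable (fun x => w x * fderiv ℝ v x (e i)) := by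
    intro i
    exact ((hw.continuous).mul (hbcont i)).integrable_of_hasCompactSupport
      (hwc.mul_right)
  have int_cpsi : Integrable (fun x => c x * (ψ x) ^ 2) := by
    apply (hc.mul ((hψ.continuous).pow 2)).integrable_of_hasCompactSupport
    apply hψc.mono
    intro x hx
    simp only [Function.mem_support] at hx ⊢
    intro h
    exact hx (by simp [h])
  -- integration by parts
  have ibp : ∀ i : Fin n,
      ∫ x, w x * fderiv ℝ (fun y => fderiv ℝ v y (e i)) x (e i) =
        - ∫ x, fderiv ℝ w x (e i) * fderiv ℝ v x (e i) := by
    intro i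
    exact integral_mul_fderiv_eq_neg_fderiv_mul_of_integrable
      (int_wb i) (int_wb2 i) (int_wb1 i)
      (fun x _ => hw.differentiable (by norm_num) x)
      (fun x _ => (hb i).differentiable (by norm_num) x)
  -- key identity: ∑ᵢ ∫ ∂ᵢw ∂ᵢv = ∫ c ψ²
  have key : (∑ i : Fin n, ∫ x, fderiv ℝ w x (e i) * fderiv ℝ v x (e i)) =
      ∫ x, c x * (ψ x) ^ 2 := by
    have h1 : ∫ x, w x * laplacian v x =
        ∑ i : Fin n, ∫ x, w x * fderiv ℝ (fun y => fderiv ℝ v y (e i)) x (e i) := by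
      rw [← integral_finset_sum _ (fun i _ => int_wb2 i)]
      congr 1
      funext x
      simp only [laplacian, Finset.mul_sum]
      rfl
    have h2 : ∀ x, w x * laplacian v x = -(c x * (ψ x) ^ 2) := by
      intro x
      have hl : laplacian v x = -(c x * v x) := by linarith [heq x]
      rw [hl]
      have : w x * v x = (ψ x) ^ 2 := by
        simp only [hw_def, hu_def]
        field_simp
        rw [div_eq_iff (hvne x)]
      calc w x * -(c x * v x) = -(c x * (w x * v x)) := by ring
        _ = -(c x * (ψ x) ^ 2) := by rw [this]
    have h3 : ∫ x, w x * laplacian v x = - ∫ x, c x * (ψ x) ^ 2 := by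
      rw [← integral_neg]
      exact integral_congr_ae (Filter.Eventually.of_forall h2)
    have h4 : ∑ i : Fin n, ∫ x, w x * fderiv ℝ (fun y => fderiv ℝ v y (e i)) x (e i) =
        - ∑ i : Fin n, ∫ x, fderiv ℝ w x (e i) * fderiv ℝ v x (e i) := by
      rw [← Finset.sum_neg_distrib]
      exact Finset.sum_congr rfl fun i _ => ibp i
    have := h1.symm.trans h3
    rw [h4] at this
    linarith
  -- pointwise derivative computations
  have ha : ∀ x, fderiv ℝ ψ x = u x • fderiv ℝ v x + v x • fderiv ℝ u x := by
    intro x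
    have hψfun : ψ = fun y => u y * v y := funext hψuv
    conv_lhs => rw [hψfun]
    exact fderiv_mul (hu.differentiable (by norm_num) x) (hv.differentiable (by norm_num) x)
  have hwder : ∀ x, fderiv ℝ w x = ψ x • fderiv ℝ u x + u x • fderiv ℝ ψ x := by
    intro x
    exact fderiv_mul (hψ2.differentiable (by norm_num) x) (hu.differentiable (by norm_num) x)
  -- pointwise: (∂ᵢψ)² = (v ∂ᵢu)² + ∂ᵢw ∂ᵢv
  have hpoint : ∀ (i : Fin n) (x : EuclideanSpace ℝ (Fin n)),
      (fderiv ℝ ψ x (e i)) ^ 2 =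
        (v x * fderiv ℝ u x (e i)) ^ 2 + fderiv ℝ w x (e i) * fderiv ℝ v x (e i) := by
    intro i x
    have h1 : fderiv ℝ ψ x (e i) = u x * fderiv ℝ v x (e i) + v x * fderiv ℝ u x (e i) := by
      rw [ha x]; simp
    have h2 : fderiv ℝ w x (e i) = ψ x * fderiv ℝ u x (e i) + u x * fderiv ℝ ψ x (e i) := by
      rw [hwder x]; simp
    rw [h1] at h2 ⊢
    rw [h2, hψuv x]
    ring
  -- the nonnegative function F
  set F : EuclideanSpace ℝ (Fin n) → ℝ := fun x => ∑ i : Fin n, (v x * fderiv ℝ u x (e i)) ^ 2 with hF_def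
  have hFcont : Continuous F := by
    apply continuous_finset_sum
    intro i _
    exact ((hv.continuous).mul (hudcont i)).pow 2
  have hFc : HasCompactSupport F := by
    apply huc.mono'
    intro x hx
    simp only [hF_def, Function.mem_support] at hx
    by_contra hts
    apply hx
    have hz : fderiv ℝ u x = 0 := by
      by_contra hne
      exact hts (support_fderiv_subset (𝕜 := ℝ) hne)
    simp [hz]
  have hFint : Integrable F := hFcont.integrable_of_hasCompactSupport hFc
  have hFnn : (0:ℝ) ≤ ∫ x, F x :=
    integral_nonneg fun x => Finset.sum_nonneg fun i _ => sq_nonneg _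
  have hnorm : ∀ x, ‖fderiv ℝ ψ x‖ ^ 2 = ∑ i : Fin n, (fderiv ℝ ψ x (e i)) ^ 2 := by
    intro x
    have := norm_sq_eq_sum_sq (fderiv ℝ ψ x)
    simpa [he_def] using this
  have hinteg : ∀ x, ‖fderiv ℝ ψ x‖ ^ 2 - c x * (ψ x) ^ 2 =
      F x + ((∑ i : Fin n, fderiv ℝ w x (e i) * fderiv ℝ v x (e i)) - c x * (ψ x) ^ 2) := by
    intro x
    rw [hnorm x]
    have hs : ∑ i : Fin n, (fderiv ℝ ψ x (e i)) ^ 2 =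
        F x + ∑ i : Fin n, fderiv ℝ w x (e i) * fderiv ℝ v x (e i) := by
      rw [hF_def, ← Finset.sum_add_distrib]
      exact Finset.sum_congr rfl fun i _ => hpoint i x
    rw [hs]
    ring
  have intG : Integrable (fun x =>
      (∑ i : Fin n, fderiv ℝ w x (e i) * fderiv ℝ v x (e i)) - c x * (ψ x) ^ 2) :=
    (integrable_finset_sum _ (fun i _ => int_wb i)).sub int_cpsi
  have hfinal : ∫ x, (‖fderiv ℝ ψ x‖ ^ 2 - c x * (ψ x) ^ 2) = ∫ x, F x := by
    rw [integral_congr_ae (Filter.Eventually.of_forall hinteg),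
      integral_add hFint intG,
      integral_sub (integrable_finset_sum _ (fun i _ => int_wb i)) int_cpsi,
      integral_finset_sum _ (fun i _ => int_wb i), key]
    ring
  rw [hfinal]
  exact hFnn
end

section
/- Let f : ℝ → ℝ be C¹ and let u : ℝ → ℝ be a C³ solution of -u'' = f(u) on ℝ with u'(x) > 0 for all x. Then u is stable, i.e., for every smooth compactly supported ψ : ℝ → ℝ, ∫_ℝ (ψ'(x)² - f'(u(x))·ψ(x)²) dx ≥ 0. -/
open MeasureTheory

lemma integral_deriv_zero_of_compactSupport {g : ℝ → ℝ} (hg : ContDiff ℝ 1 g)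
    (hgc : HasCompactSupport g) : ∫ x : ℝ, deriv g x = 0 := by
  have hint : Integrable (deriv g) :=
    (hg.continuous_deriv le_rfl).integrable_of_hasCompactSupport hgc.deriv
  rw [← intervalIntegral.integral_Iic_add_Ioi (b := (0:ℝ)) hint.integrableOn hint.integrableOn,
    hgc.integral_Iic_deriv_eq hg, hgc.integral_Ioi_deriv_eq hg]
  ring

theorem stmt_4 (f u : ℝ → ℝ) (hf : ContDiff ℝ 1 f) (hu : ContDiff ℝ 3 u)
    (heq : ∀ x : ℝ, -(deriv (deriv u) x) = f (u x))
    (hmono : ∀ x : ℝ, 0 < deriv u x) :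
    ∀ ψ : ℝ → ℝ, ContDiff ℝ (⊤ : ℕ∞) ψ → HasCompactSupport ψ →
      0 ≤ ∫ x : ℝ, ((deriv ψ x)^2 - deriv f (u x) * (ψ x)^2) := by
  intro ψ hψ hψc
  set v := deriv u with hv_def
  have hv2 : ContDiff ℝ 2 v :=
    ((contDiff_succ_iff_deriv (n := 2)).mp (by exact_mod_cast hu)).2.2
  have hvne : ∀ x, v x ≠ 0 := fun x => (hmono x).ne'
  set φ : ℝ → ℝ := fun x => ψ x / v x with hφ_def
  have hφ : ContDiff ℝ 1 φ :=
    (hψ.of_le (by simp)).div (hv2.of_le one_le_two) hvne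
  have hφd : Differentiable ℝ φ := hφ.differentiable one_ne_zero
  have hφc : HasCompactSupport φ := by
    apply hψc.mono
    intro x hx
    rw [Function.mem_support] at hx ⊢
    intro h0
    exact hx (by simp [hφ_def, h0])
  have hv' : ContDiff ℝ 1 (deriv v) :=
    ((contDiff_succ_iff_deriv (n := 1)).mp hv2).2.2
  have hvd : Differentiable ℝ v := hv2.differentiable two_ne_zero
  have hv'd : Differentiable ℝ (deriv v) := hv'.differentiable one_ne_zero
  -- ODE for v: v'' = -(f'(u) * v)
  have hODE : ∀ x, deriv (deriv v) x = -(deriv f (u x) * v x) := by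
    intro x
    have h1 : deriv v = fun y => -(f (u y)) := by
      funext y
      have := heq y
      linarith
    have hfd : DifferentiableAt ℝ f (u x) := hf.differentiable one_ne_zero (u x)
    have hud : DifferentiableAt ℝ u x := hu.differentiable (by norm_num) x
    have h2 : HasDerivAt (fun y => -(f (u y))) (-(deriv f (u x) * deriv u x)) x :=
      ((hfd.hasDerivAt.comp x hud.hasDerivAt)).neg
    rw [h1, h2.deriv]
  -- ψ = v * φ
  have hψ_eq : ∀ x, ψ x = v x * φ x := by
    intro x
    rw [hφ_def]
    field_simp
    rw [mul_div_cancel_right₀ _ (hvne x)]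
  set g : ℝ → ℝ := fun x => v x * deriv v x * (φ x)^2 with hg_def
  have hg : ContDiff ℝ 1 g :=
    ((hv2.of_le one_le_two).mul hv').mul (hφ.pow 2)
  have hgc : HasCompactSupport g := by
    apply hφc.mono
    intro x hx
    rw [Function.mem_support] at hx ⊢
    intro h0
    exact hx (by simp [hg_def, h0])
  have hgint : ∫ x : ℝ, deriv g x = 0 := integral_deriv_zero_of_compactSupport hg hgc
  -- key pointwise identity
  have key : ∀ x, (deriv ψ x)^2 - deriv f (u x) * (ψ x)^2
      = (v x * deriv φ x)^2 + deriv g x := by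
    intro x
    have hdψ : deriv ψ x = deriv v x * φ x + v x * deriv φ x := by
      have h3 : ψ = fun y => v y * φ y := funext hψ_eq
      rw [h3, deriv_fun_mul (hvd x) (hφd x)]
    have hdg : deriv g x = (deriv v x * deriv v x + v x * deriv (deriv v) x) * (φ x)^2
        + (v x * deriv v x) * (2 * φ x * deriv φ x) := by
      rw [hg_def]
      rw [deriv_fun_mul (c := fun y => v y * deriv v y) (d := fun y => φ y ^ 2) ((hvd x).mul (hv'd x)) ((hφd x).pow 2)]
      rw [deriv_fun_mul (hvd x) (hv'd x)]
      congr 1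
      rw [deriv_fun_pow (hφd x) 2]
      ring
    rw [hdψ, hdg, hODE x, hψ_eq x]
    ring
  have hcont_int : Continuous fun x => (v x * deriv φ x)^2 :=
    ((hv2.continuous.mul (hφ.continuous_deriv le_rfl))).pow 2
  have hi1 : Integrable (fun x => (v x * deriv φ x)^2) := by
    apply hcont_int.integrable_of_hasCompactSupport
    apply hφc.deriv.mono
    intro x hx
    rw [Function.mem_support] at hx ⊢
    intro h0
    exact hx (by simp [h0])
  have hi2 : Integrable (deriv g) :=
    (hg.continuous_deriv le_rfl).integrable_of_hasCompactSupport hgc.deriv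
  calc (0:ℝ) ≤ ∫ x : ℝ, (v x * deriv φ x)^2 := by
        apply integral_nonneg
        intro x
        positivity
    _ = ∫ x : ℝ, ((v x * deriv φ x)^2 + deriv g x) := by
        rw [integral_add hi1 hi2, hgint, add_zero]
    _ = ∫ x : ℝ, ((deriv ψ x)^2 - deriv f (u x) * (ψ x)^2) := by
        congr 1
        funext x
        rw [key x]
end

section
/- The solution u(x) = tanh(x/√2) of the one-dimensional Allen–Cahn equation -u'' = u - u³ is stable: for every smooth compactly supported ψ : ℝ → ℝ, ∫_ℝ (ψ'(x)² - (1 - 3·u(x)²)·ψ(x)²) dx ≥ 0. -/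
open MeasureTheory

lemma my_hasDerivAt_tanh (x : ℝ) :
    HasDerivAt Real.tanh (1 - Real.tanh x ^ 2) x := by
  have hc : Real.cosh x ≠ 0 := (Real.cosh_pos x).ne'
  have h := (Real.hasDerivAt_sinh x).div (Real.hasDerivAt_cosh x) hc
  have hfun : (fun y => Real.sinh y / Real.cosh y) = Real.tanh := by
    funext y; exact (Real.tanh_eq_sinh_div_cosh y).symm
  rw [show Real.sinh / Real.cosh = Real.tanh from hfun] at h
  refine h.congr_deriv ?_
  have h2 : Real.cosh x ^ 2 - Real.sinh x ^ 2 = 1 := Real.cosh_sq_sub_sinh_sq x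
  rw [Real.tanh_eq_sinh_div_cosh]
  field_simp

theorem stmt_5 :
    let u : ℝ → ℝ := fun x => Real.tanh (x / Real.sqrt 2)
    ∀ ψ : ℝ → ℝ, ContDiff ℝ (⊤ : ℕ∞) ψ → HasCompactSupport ψ →
      0 ≤ ∫ x : ℝ, ((deriv ψ x)^2 - (1 - 3 * (u x)^2) * (ψ x)^2) := by
  intro u ψ hψ hψc
  set c := Real.sqrt 2 with hc
  have hc0 : (0:ℝ) < c := Real.sqrt_pos.mpr (by norm_num)
  have hc2 : c ^ 2 = 2 := Real.sq_sqrt (by norm_num)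
  -- t x = tanh (x / c)
  set t : ℝ → ℝ := fun x => Real.tanh (x / c) with ht
  have hdt : ∀ x, HasDerivAt t ((1 - t x ^ 2) / c) x := by
    intro x
    have h1 : HasDerivAt (fun x : ℝ => x / c) (1 / c) x := by
      simpa using (hasDerivAt_id x).div_const c
    have := (my_hasDerivAt_tanh (x / c)).comp x h1
    simpa [ht, div_eq_mul_inv, mul_comm, Function.comp_def] using this
  -- g = -c * t ; F = g * ψ^2
  set g : ℝ → ℝ := fun x => -c * t x with hg
  set F : ℝ → ℝ := fun x => g x * ψ x ^ 2 with hF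
  set F' : ℝ → ℝ := fun x =>
    (-(1 - t x ^ 2)) * ψ x ^ 2 + g x * (2 * ψ x * deriv ψ x) with hF'
  have hψd : ∀ x, HasDerivAt ψ (deriv ψ x) x := fun x =>
    (hψ.differentiable (by simp) x).hasDerivAt
  have hdF : ∀ x, HasDerivAt F (F' x) x := by
    intro x
    have hgd : HasDerivAt g (-c * ((1 - t x ^ 2) / c)) x := (hdt x).const_mul (-c)
    have hgd' : HasDerivAt g (-(1 - t x ^ 2)) x := by
      convert hgd using 1; field_simp
    have hp : HasDerivAt (fun x => ψ x ^ 2) (2 * ψ x * deriv ψ x) x := by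
      have h2 := (hψd x).mul (hψd x)
      have heq2 : (fun y => ψ y * ψ y) = fun y => ψ y ^ 2 := by funext y; ring
      rw [show ψ * ψ = fun y => ψ y ^ 2 from heq2] at h2
      refine h2.congr_deriv ?_; ring
    simpa [hF, hF', Pi.mul_def] using hgd'.mul hp
  have hψcont : Continuous ψ := hψ.continuous
  have hψ'cont : Continuous (deriv ψ) := hψ.continuous_deriv (by simp)
  have htanh : Continuous Real.tanh :=
    continuous_iff_continuousAt.mpr fun x => (my_hasDerivAt_tanh x).continuousAt
  have htcont : Continuous t := htanh.comp (continuous_id.div_const c)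
  have hgcont : Continuous g := (continuous_const.mul htcont)
  -- pointwise identity
  have key : ∀ x, (deriv ψ x)^2 - (1 - 3 * (u x)^2) * (ψ x)^2
      = (deriv ψ x - g x * ψ x)^2 + F' x := by
    intro x
    have hux : u x = t x := rfl
    rw [hux]
    simp only [hF', hg]
    linear_combination (-(t x ^ 2 * ψ x ^ 2)) * hc2
  -- compact support facts
  have hψ'c : HasCompactSupport (deriv ψ) := hψc.deriv
  have hψsq : HasCompactSupport (fun x => ψ x ^ 2) := by
    simpa [pow_two, Pi.mul_def] using (hψc.mul_left (f := ψ))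
  have hsubc : HasCompactSupport (fun x => deriv ψ x - g x * ψ x) := by
    have h1 : HasCompactSupport (fun x => -g x * ψ x) := hψc.mul_left
    have h2 := hψ'c.add h1
    simpa [sub_eq_add_neg, neg_mul, Pi.add_def] using h2
  have hsqc : HasCompactSupport (fun x => (deriv ψ x - g x * ψ x)^2) := by
    simpa [pow_two, Pi.mul_def] using hsubc.mul_left (f := fun x => deriv ψ x - g x * ψ x)
  have hFc : HasCompactSupport F := hψsq.mul_left
  have hF'cont : Continuous F' := by
    apply Continuous.add
    · exact ((continuous_const.sub (htcont.pow 2)).neg).mul (hψcont.pow 2)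
    · exact hgcont.mul ((continuous_const.mul hψcont).mul hψ'cont)
  have hF'c : HasCompactSupport F' := by
    apply HasCompactSupport.add
    · exact hψsq.mul_left
    · exact HasCompactSupport.mul_left (hψ'c.mul_left (f := fun x => 2 * ψ x))
  -- integrability
  have hsqcont : Continuous (fun x => (deriv ψ x - g x * ψ x)^2) :=
    ((hψ'cont.sub (hgcont.mul hψcont)).pow 2)
  have hint1 : Integrable (fun x => (deriv ψ x - g x * ψ x)^2) :=
    hsqcont.integrable_of_hasCompactSupport hsqc
  have hint2 : Integrable F' := hF'cont.integrable_of_hasCompactSupport hF'c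
  -- ∫ F' = 0
  have hderiv : deriv F = F' := funext fun x => (hdF x).deriv
  have hFC1 : ContDiff ℝ 1 F := by
    apply contDiff_one_iff_deriv.mpr
    exact ⟨fun x => (hdF x).differentiableAt, by rw [hderiv]; exact hF'cont⟩
  have hintF' : (∫ x : ℝ, F' x) = 0 := by
    rw [← hderiv]
    have hint : Integrable (deriv F) := by rw [hderiv]; exact hint2
    rw [← intervalIntegral.integral_Iic_add_Ioi (b := 0) hint.integrableOn hint.integrableOn,
      hFc.integral_Iic_deriv_eq hFC1 0, hFc.integral_Ioi_deriv_eq hFC1 0]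
    ring
  have heqI : (∫ x : ℝ, ((deriv ψ x)^2 - (1 - 3 * (u x)^2) * (ψ x)^2))
      = ∫ x : ℝ, (deriv ψ x - g x * ψ x)^2 := by
    calc (∫ x : ℝ, ((deriv ψ x)^2 - (1 - 3 * (u x)^2) * (ψ x)^2))
        = ∫ x : ℝ, ((deriv ψ x - g x * ψ x)^2 + F' x) := by
          exact integral_congr_ae (Filter.Eventually.of_forall fun x => key x)
      _ = (∫ x : ℝ, (deriv ψ x - g x * ψ x)^2) + ∫ x : ℝ, F' x :=
          integral_add hint1 hint2
      _ = ∫ x : ℝ, (deriv ψ x - g x * ψ x)^2 := by rw [hintF', add_zero]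
  rw [heqI]
  exact integral_nonneg fun x => sq_nonneg _
end

section
/- Let φ : ℝ → ℝ be C¹ with φ(x) > 0 for all x, and let σ : ℝ → ℝ be C² such that the product v := φ·σ is bounded on ℝ and σ(x)·(φ²·σ')'(x) ≥ 0 for all x ∈ ℝ. Then σ is constant. -/
/-!
With `w := φ² σ'` and `h := σ w`, one has `h' = (φ σ')² + σ w' ≥ (φ σ')²`, while boundedness of
`φ σ` gives `h² = (φ σ)² (φ σ')² ≤ C (φ σ')² ≤ C h'`. A function on all of `ℝ` satisfying the
Riccati inequality `h² ≤ C h'` vanishes identically: if `h a > 0`, then `1 / h` decreases with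
slope at most `-1 / C` to the right of `a`, so it reaches `0` in finite time, and symmetrically to
the left if `h a < 0`. Hence `h' = 0`, so `φ σ' = 0` and `σ' = 0`.
-/

section Riccati

variable {h h' : ℝ → ℝ} {C : ℝ}

theorem nonpos_of_sq_le_mul_hasDerivAt (hC : 0 < C) (hd : ∀ x, HasDerivAt h (h' x) x)
    (hsq : ∀ x, h x ^ 2 ≤ C * h' x) (a : ℝ) : h a ≤ 0 := by
  by_contra! ha
  have hmono : Monotone h := monotone_of_deriv_nonneg (fun x => (hd x).differentiableAt)
    fun x => (hd x).deriv ▸ nonneg_of_mul_nonneg_right ((sq_nonneg _).trans (hsq x)) hC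
  have hpos : ∀ x ∈ Set.Ici a, 0 < h x := fun x hx => ha.trans_le (hmono hx)
  have hinv : ∀ x ∈ Set.Ici a, HasDerivAt h⁻¹ (-h' x / h x ^ 2) x :=
    fun x hx => (hd x).inv (hpos x hx).ne'
  have hslope : ∀ x ∈ interior (Set.Ici a), deriv h⁻¹ x ≤ -C⁻¹ := by
    intro x hx
    have hx := interior_subset hx
    rw [(hinv x hx).deriv, neg_div, neg_le_neg_iff, le_div_iff₀ (pow_pos (hpos x hx) 2),
      inv_mul_le_iff₀ hC]
    exact hsq x
  set b := a + C / h a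
  have hab : a ≤ b := le_add_of_nonneg_right (div_pos hC ha).le
  have hdrop := (convex_Ici a).image_sub_le_mul_sub_of_deriv_le
    (fun x hx => (hinv x hx).continuousAt.continuousWithinAt)
    (fun x hx => (hinv x (interior_subset hx)).differentiableAt.differentiableWithinAt)
    hslope a Set.self_mem_Ici b hab hab
  have hb : (h b)⁻¹ ≤ 0 := by
    have : -C⁻¹ * (b - a) = -(h a)⁻¹ := by simp only [b]; field_simp; ring
    simp only [Pi.inv_apply, this] at hdrop
    linarith
  exact (inv_pos.mpr (hpos b hab)).not_ge hb

theorem eq_zero_of_sq_le_mul_hasDerivAt (hC : 0 < C) (hd : ∀ x, HasDerivAt h (h' x) x)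
    (hsq : ∀ x, h x ^ 2 ≤ C * h' x) (a : ℝ) : h a = 0 := by
  refine le_antisymm (nonpos_of_sq_le_mul_hasDerivAt hC hd hsq a) ?_
  have hd_neg : ∀ x, HasDerivAt (fun y => -h (-y)) (h' (-x)) x := fun x => by
    have := ((hd (-x)).comp x (hasDerivAt_neg x)).neg
    rwa [mul_neg_one, neg_neg] at this
  simpa using nonpos_of_sq_le_mul_hasDerivAt hC hd_neg (fun x => by simpa using hsq (-x)) (-a)

end Riccati

theorem stmt_9 (φ σ : ℝ → ℝ) (hφ : ContDiff ℝ 1 φ) (hφpos : ∀ x, 0 < φ x)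
    (hσ : ContDiff ℝ 2 σ)
    (hbdd : ∃ M : ℝ, ∀ x, |φ x * σ x| ≤ M)
    (hineq : ∀ x : ℝ, 0 ≤ σ x * deriv (fun y => (φ y)^2 * deriv σ y) x) :
    ∀ x y : ℝ, σ x = σ y := by
  obtain ⟨M, hM⟩ := hbdd
  have hσd : Differentiable ℝ σ := hσ.differentiable (by norm_num)
  set w := fun y => (φ y)^2 * deriv σ y
  have hwd : Differentiable ℝ w :=
    ((hφ.pow 2).mul (contDiff_succ_iff_deriv.mp (hσ : ContDiff ℝ (1 + 1) σ)).2.2).differentiable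
      one_ne_zero
  set h' := fun x => (φ x * deriv σ x) ^ 2 + σ x * deriv w x
  have hd : ∀ x, HasDerivAt (fun x => σ x * w x) (h' x) x := fun x =>
    ((hσd x).hasDerivAt.mul (hwd x).hasDerivAt).congr_deriv (by simp only [h', w]; ring)
  have hsq : ∀ x, (σ x * w x) ^ 2 ≤ (M ^ 2 + 1) * h' x := fun x => by
    have hφσ : (φ x * σ x) ^ 2 ≤ M ^ 2 + 1 := by
      nlinarith [sq_abs (φ x * σ x), abs_nonneg (φ x * σ x), hM x]
    calc (σ x * w x) ^ 2 = (φ x * σ x) ^ 2 * (φ x * deriv σ x) ^ 2 := by ring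
      _ ≤ (M ^ 2 + 1) * (φ x * deriv σ x) ^ 2 := by gcongr
      _ ≤ (M ^ 2 + 1) * h' x := by gcongr; exact le_add_of_nonneg_right (hineq x)
  have hzero := eq_zero_of_sq_le_mul_hasDerivAt (by positivity) hd hsq
  have hσ' : ∀ x, deriv σ x = 0 := fun x => by
    have hh' : h' x = 0 := (hd x).unique <| by
      simpa only [funext hzero] using hasDerivAt_const x (0 : ℝ)
    have : (φ x * deriv σ x) ^ 2 = 0 := le_antisymm (by linarith [hineq x]) (sq_nonneg _)
    simpa [(hφpos x).ne'] using this
  exact is_const_of_deriv_eq_zero hσd hσ'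
end

section
/- Let f : ℝ → ℝ be C¹ and u : [a,b] → ℝ a C² solution of -u'' = f(u) on [a,b] with Neumann boundary conditions u'(a) = u'(b) = 0. If u is stable, i.e., ∫_a^b (ψ'² - f'(u)ψ²) ≥ 0 for every C¹ function ψ : [a,b] → ℝ, then u is constant. -/
/-!
Write `c = f' ∘ u` and `v = u'`. Differentiating `-u'' = f(u)` shows that `v` solves the Jacobi
equation `v'' + c v = 0`, so integrating by parts against any `C¹` test function `φ` turns the index
form `I(v, φ) = ∫ (v' φ' - c v φ)` into the boundary term `[v' φ]ₐᵇ`. By the Neumann condition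
`I(v, v) = 0`, and stability says `I` is positive semidefinite, so `v` lies in the kernel of `I`.
Testing with `φ(x) = b - x` then gives `v'(a) = 0`; together with `v(a) = 0`, uniqueness for the
Jacobi equation forces `v ≡ 0`, i.e. `u` is constant.
-/

open Set intervalIntegral

theorem integral_eq_sub_of_hasDerivWithinAt_Icc {E : Type*} [NormedAddCommGroup E]
    [NormedSpace ℝ E] [CompleteSpace E] {a b : ℝ} {f f' : ℝ → E} (hab : a ≤ b)
    (hf : ∀ x ∈ Icc a b, HasDerivWithinAt f (f' x) (Icc a b) x)
    (hf' : ContinuousOn f' (Icc a b)) : ∫ x in a..b, f' x = f b - f a :=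
  integral_eq_sub_of_hasDeriv_right_of_le hab (fun x hx => (hf x hx).continuousWithinAt)
    (fun x hx => ((hf x (Ioo_subset_Icc_self hx)).hasDerivAt
      (Icc_mem_nhds hx.1 hx.2)).hasDerivWithinAt)
    (hf'.intervalIntegrable_of_Icc hab)

section IndexForm

variable {a b : ℝ} {c ψ φ : ℝ → ℝ}

/-- The index form, i.e. the polarization of the second variation `∫ (ψ'² - c ψ²)`. -/
noncomputable def indexForm (a b : ℝ) (c ψ φ : ℝ → ℝ) : ℝ :=
  ∫ x in a..b, (derivWithin ψ (Icc a b) x * derivWithin φ (Icc a b) x - c x * ψ x * φ x)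

/-- The Jacobi equation `ψ'' + c ψ = 0` on `[a, b]`. -/
def IsJacobiField (a b : ℝ) (c ψ : ℝ → ℝ) : Prop :=
  ∀ x ∈ Icc a b, HasDerivWithinAt (derivWithin ψ (Icc a b)) (-(c x * ψ x)) (Icc a b) x

theorem indexForm_self :
    indexForm a b c ψ ψ = ∫ x in a..b, ((derivWithin ψ (Icc a b) x) ^ 2 - c x * (ψ x) ^ 2) := by
  unfold indexForm
  congr 1 with x
  ring

theorem intervalIntegrable_indexForm_integrand (hab : a < b) (hc : ContinuousOn c (Icc a b))
    (hψ : ContDiffOn ℝ 1 ψ (Icc a b)) (hφ : ContDiffOn ℝ 1 φ (Icc a b)) :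
    IntervalIntegrable
      (fun x => derivWithin ψ (Icc a b) x * derivWithin φ (Icc a b) x - c x * ψ x * φ x)
      MeasureTheory.volume a b := by
  have hs := uniqueDiffOn_Icc hab
  refine ContinuousOn.intervalIntegrable_of_Icc hab.le ?_
  exact ((hψ.continuousOn_derivWithin hs le_rfl).mul (hφ.continuousOn_derivWithin hs le_rfl)).sub
    ((hc.mul hψ.continuousOn).mul hφ.continuousOn)

theorem indexForm_add_mul_self (hab : a < b) (hc : ContinuousOn c (Icc a b))
    (hψ : ContDiffOn ℝ 1 ψ (Icc a b)) (hφ : ContDiffOn ℝ 1 φ (Icc a b)) (t : ℝ) :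
    indexForm a b c (fun x => ψ x + t * φ x) (fun x => ψ x + t * φ x) =
      indexForm a b c ψ ψ + 2 * t * indexForm a b c ψ φ + t ^ 2 * indexForm a b c φ φ := by
  have hderiv : ∀ x ∈ Icc a b, derivWithin (fun x => ψ x + t * φ x) (Icc a b) x =
      derivWithin ψ (Icc a b) x + t * derivWithin φ (Icc a b) x := fun x hx =>
    ((hψ.differentiableOn one_ne_zero x hx).hasDerivWithinAt.add
      ((hφ.differentiableOn one_ne_zero x hx).hasDerivWithinAt.const_mul t)).derivWithin
      (uniqueDiffOn_Icc hab x hx)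
  have hψψ := intervalIntegrable_indexForm_integrand hab hc hψ hψ
  have hψφ := intervalIntegrable_indexForm_integrand hab hc hψ hφ
  have hφφ := intervalIntegrable_indexForm_integrand hab hc hφ hφ
  unfold indexForm
  rw [← integral_const_mul, ← integral_const_mul, ← integral_add hψψ (hψφ.const_mul _),
    ← integral_add (hψψ.add (hψφ.const_mul _)) (hφφ.const_mul _)]
  refine integral_congr fun x hx => ?_
  rw [uIcc_of_le hab.le] at hx
  simp only [hderiv x hx]
  ring

theorem indexForm_eq_zero_of_nonneg (hab : a < b) (hc : ContinuousOn c (Icc a b))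
    (hI : ∀ ψ, ContDiffOn ℝ 1 ψ (Icc a b) → 0 ≤ indexForm a b c ψ ψ)
    (hψ : ContDiffOn ℝ 1 ψ (Icc a b)) (hψ₀ : indexForm a b c ψ ψ = 0)
    (hφ : ContDiffOn ℝ 1 φ (Icc a b)) : indexForm a b c ψ φ = 0 := by
  have hquad : ∀ t : ℝ,
      0 ≤ indexForm a b c φ φ * (t * t) + 2 * indexForm a b c ψ φ * t + 0 := fun t => by
    have := hI (fun x => ψ x + t * φ x) (hψ.add (contDiffOn_const.mul hφ))
    rw [indexForm_add_mul_self hab hc hψ hφ, hψ₀] at this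
    linarith
  have := discrim_le_zero hquad
  rw [discrim] at this
  nlinarith [sq_nonneg (indexForm a b c ψ φ)]

theorem indexForm_eq_of_isJacobiField (hab : a < b) (hc : ContinuousOn c (Icc a b))
    (hψ : ContinuousOn ψ (Icc a b)) (hJ : IsJacobiField a b c ψ)
    (hφ : ContDiffOn ℝ 1 φ (Icc a b)) :
    indexForm a b c ψ φ =
      derivWithin ψ (Icc a b) b * φ b - derivWithin ψ (Icc a b) a * φ a := by
  have hψ' : ContinuousOn (derivWithin ψ (Icc a b)) (Icc a b) := fun x hx =>
    (hJ x hx).continuousWithinAt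
  unfold indexForm
  refine integral_eq_sub_of_hasDerivWithinAt_Icc (f := fun x => derivWithin ψ (Icc a b) x * φ x)
    hab.le (fun x hx => ?_) ?_
  · exact ((hJ x hx).mul (hφ.differentiableOn one_ne_zero x hx).hasDerivWithinAt).congr_deriv
      (by ring)
  · exact (hψ'.mul (hφ.continuousOn_derivWithin (uniqueDiffOn_Icc hab) le_rfl)).sub
      ((hc.mul hψ).mul hφ.continuousOn)

theorem IsJacobiField.eqOn_zero (hc : ContinuousOn c (Icc a b)) (hJ : IsJacobiField a b c ψ)
    (hψ : DifferentiableOn ℝ ψ (Icc a b)) (hψa : ψ a = 0)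
    (hψ'a : derivWithin ψ (Icc a b) a = 0) : EqOn ψ 0 (Icc a b) := by
  obtain ⟨M, hM⟩ := isCompact_Icc.exists_bound_of_continuousOn hc
  have hderiv : ∀ x ∈ Icc a b, HasDerivWithinAt (fun y => (ψ y, derivWithin ψ (Icc a b) y))
      (derivWithin ψ (Icc a b) x, -(c x * ψ x)) (Icc a b) x := fun x hx =>
    (hψ x hx).hasDerivWithinAt.prodMk (hJ x hx)
  have hbound : ∀ x ∈ Ico a b, ‖(derivWithin ψ (Icc a b) x, -(c x * ψ x))‖ ≤
      max 1 M * ‖(ψ x, derivWithin ψ (Icc a b) x)‖ := fun x hx => by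
    set p := (ψ x, derivWithin ψ (Icc a b) x)
    have hK : ‖p‖ ≤ max 1 M * ‖p‖ := le_mul_of_one_le_left (norm_nonneg _) (le_max_left _ _)
    refine max_le (le_trans (norm_snd_le p) hK) ?_
    calc ‖-(c x * ψ x)‖ = ‖c x‖ * ‖p.1‖ := by rw [norm_neg, norm_mul]
      _ ≤ max 1 M * ‖p‖ :=
        mul_le_mul (le_trans (hM x (Ico_subset_Icc_self hx)) (le_max_right _ _))
          (norm_fst_le p) (norm_nonneg _) (by positivity)
  have hzero := eq_zero_of_abs_deriv_le_mul_abs_self_of_eq_zero_right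
    (fun x hx => (hderiv x hx).continuousWithinAt)
    (fun x hx => (hderiv x (Ico_subset_Icc_self hx)).mono_of_mem_nhdsWithin
      (Icc_mem_nhdsGE_of_mem hx))
    (by simp [hψa, hψ'a]) hbound
  exact fun x hx => congrArg Prod.fst (hzero x hx)

end IndexForm

theorem isJacobiField_derivWithin {a b : ℝ} {f u : ℝ → ℝ} (hf : Differentiable ℝ f)
    (hu : ContDiffOn ℝ 2 u (Icc a b))
    (heq : ∀ x ∈ Icc a b, -(derivWithin (derivWithin u (Icc a b)) (Icc a b) x) = f (u x)) :
    IsJacobiField a b (fun x => deriv f (u x)) (derivWithin u (Icc a b)) := fun x hx =>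
  (((hf (u x)).hasDerivAt.comp_hasDerivWithinAt x
    ((hu.differentiableOn two_ne_zero x hx).hasDerivWithinAt)).neg.congr
      (fun y hy => neg_eq_iff_eq_neg.mp (heq y hy)) (neg_eq_iff_eq_neg.mp (heq x hx)))

theorem stmt_10 (f u : ℝ → ℝ) (a b : ℝ) (hab : a < b)
    (hf : ContDiff ℝ 1 f) (hu : ContDiffOn ℝ 2 u (Icc a b))
    (heq : ∀ x ∈ Icc a b,
      -(derivWithin (derivWithin u (Icc a b)) (Icc a b) x) = f (u x))
    (hNa : derivWithin u (Icc a b) a = 0) (hNb : derivWithin u (Icc a b) b = 0)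
    (hstable : ∀ ψ : ℝ → ℝ, ContDiffOn ℝ 1 ψ (Icc a b) →
      0 ≤ ∫ x in a..b, ((derivWithin ψ (Icc a b) x)^2 - deriv f (u x) * (ψ x)^2)) :
    ∀ x ∈ Icc a b, ∀ y ∈ Icc a b, u x = u y := by
  set c := fun x => deriv f (u x)
  set v := derivWithin u (Icc a b)
  have hc : ContinuousOn c (Icc a b) :=
    (hf.continuous_deriv le_rfl).comp_continuousOn hu.continuousOn
  have hv : ContDiffOn ℝ 1 v (Icc a b) := hu.derivWithin (uniqueDiffOn_Icc hab) le_rfl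
  have hJ : IsJacobiField a b c v := isJacobiField_derivWithin (hf.differentiable one_ne_zero) hu heq
  have hI : ∀ ψ, ContDiffOn ℝ 1 ψ (Icc a b) → 0 ≤ indexForm a b c ψ ψ := fun ψ hψ =>
    indexForm_self (c := c) ▸ hstable ψ hψ
  have hIv : indexForm a b c v v = 0 := by
    rw [indexForm_eq_of_isJacobiField hab hc hv.continuousOn hJ hv, hNa, hNb]
    ring
  have hv'a : derivWithin v (Icc a b) a = 0 := by
    have hφ : ContDiffOn ℝ 1 (fun x => b - x) (Icc a b) := contDiffOn_const.sub contDiffOn_id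
    have h := indexForm_eq_zero_of_nonneg hab hc hI hv hIv hφ
    rw [indexForm_eq_of_isJacobiField hab hc hv.continuousOn hJ hφ] at h
    simpa [(sub_pos.mpr hab).ne'] using h
  have hv₀ := hJ.eqOn_zero hc (hv.differentiableOn one_ne_zero) hNa hv'a
  have hconst := constant_of_derivWithin_zero (hu.differentiableOn two_ne_zero)
    fun x hx => hv₀ (Ico_subset_Icc_self hx)
  intro x hx y hy
  rw [hconst x hx, hconst y hy]
end
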